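/- arXiv:0710.3523 — 2 statements merged into one kernel-verified Lean document; each statement's English description precedes it below -/
import Mathlib

section
/- For all n ≥ 0, ℓ ≥ 0 and k ≥ 2, the number d_{ℓ,k}(n) of k-noncrossing tangled diagrams over [n] with exactly ℓ vertices of degree two satisfies d_{ℓ,k}(n) = Σ_{i=0}^{n} C(n,i) · C(n−i,ℓ) · f_k(n−i+ℓ), where C(a,b) denotes the binomial coefficient. -/
/-- A perfect matching on the linearly ordered set `Fin m`, encoded as a
fixed-point-free involution: each `x` is matched with `f x`. -/
def IsMatching {m : ℕ} (f : Fin m → Fin m) : Prop :=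
  (∀ x, f (f x) = x) ∧ ∀ x, f x ≠ x

/-- The matching `f` contains `k` mutually crossing arcs
`(a 0, b 0), …, (a (k-1), b (k-1))` with
`a 0 < a 1 < ⋯ < a (k-1) < b 0 < b 1 < ⋯ < b (k-1)`. -/
def MatchCrossing (k : ℕ) {m : ℕ} (f : Fin m → Fin m) : Prop :=
  ∃ a b : Fin k → Fin m, StrictMono a ∧ StrictMono b ∧
    (∀ s t, a s < b t) ∧ ∀ t, f (a t) = b t

/-- `fk k m` is the number of `k`-noncrossing perfect matchings of a linearly
ordered `m`-element set. -/
noncomputable def fk (k m : ℕ) : ℕ :=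
  Nat.card {f : Fin m → Fin m // IsMatching f ∧ ¬ MatchCrossing k f}

/-- A `k`-noncrossing tangled diagram over `[n]` with `ℓ` vertices of degree two,
presented (via the inflation map) as a triple `(I, D, M)` where `I` is the set of
isolated points, `D ⊆ [n] ∖ I` is the set of degree-2 vertices with `|D| = ℓ`,
and `M` is a `k`-noncrossing perfect matching of the linearly ordered
`(n - |I| + ℓ)`-element set obtained from `[n] ∖ I` by doubling each element
of `D`. -/
structure TangledTriple (k l n : ℕ) where
  I : Finset (Fin n)
  D : Finset (Fin n)
  hID : Disjoint I D
  hD : D.card = l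
  M : Fin (n - I.card + l) → Fin (n - I.card + l)
  hM : IsMatching M
  hMc : ¬ MatchCrossing k M

/-! A triple is a choice of `I`, followed by independent choices of `D` among the
`n - |I|` remaining points and of a `k`-noncrossing matching on `n - |I| + ℓ` points.
Grouping the sets `I` by their size `i` gives the factor `C(n, i)`. -/

open Finset

theorem Finset.natCard_disjoint_card_eq_choose {α : Type*} [Fintype α] [DecidableEq α]
    (I : Finset α) (l : ℕ) :
    Nat.card {D : Finset α // Disjoint I D ∧ D.card = l} = (Fintype.card α - #I).choose l := by
  have e : {D : Finset α // Disjoint I D ∧ D.card = l} ≃ Iᶜ.powersetCard l :=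
    Equiv.subtypeEquivRight fun D => by
      rw [mem_powersetCard, subset_compl_iff_disjoint_left]
  rw [Nat.card_congr e, Nat.card_eq_fintype_card, Fintype.card_coe, card_powersetCard,
    card_compl]

def TangledTriple.equivSigma (k l n : ℕ) :
    TangledTriple k l n ≃
      Σ I : Finset (Fin n), {D : Finset (Fin n) // Disjoint I D ∧ D.card = l} ×
        {f : Fin (n - #I + l) → Fin (n - #I + l) // IsMatching f ∧ ¬ MatchCrossing k f} where
  toFun T := ⟨T.I, ⟨T.D, T.hID, T.hD⟩, ⟨T.M, T.hM, T.hMc⟩⟩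
  invFun := fun ⟨I, ⟨D, hID, hD⟩, ⟨M, hM, hMc⟩⟩ => ⟨I, D, hID, hD, M, hM, hMc⟩
  left_inv _ := rfl
  right_inv := fun ⟨_, ⟨_, _, _⟩, ⟨_, _, _⟩⟩ => rfl

theorem tangled_count_general (n l k : ℕ) :
    Nat.card (TangledTriple k l n) =
      ∑ i ∈ Finset.range (n + 1),
        n.choose i * (n - i).choose l * fk k (n - i + l) := by
  calc Nat.card (TangledTriple k l n)
      = ∑ I : Finset (Fin n), (n - #I).choose l * fk k (n - #I + l) := by
        rw [Nat.card_congr (TangledTriple.equivSigma k l n), Nat.card_sigma]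
        refine sum_congr rfl fun I _ => ?_
        rw [Nat.card_prod, natCard_disjoint_card_eq_choose, Fintype.card_fin]
        rfl
    _ = ∑ i ∈ range (n + 1), n.choose i * (n - i).choose l * fk k (n - i + l) := by
        rw [← powerset_univ, sum_powerset_apply_card fun i => (n - i).choose l * fk k (n - i + l)]
        simp only [card_univ, Fintype.card_fin, smul_eq_mul, mul_assoc]

/-- The number `d_{ℓ,k}(n)` of `k`-noncrossing tangled diagrams over `[n]` with
`ℓ` vertices of degree two satisfies
`d_{ℓ,k}(n) = ∑_{i=0}^{n} C(n,i) · C(n-i,ℓ) · f_k(n-i+ℓ)`. -/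
theorem tangled_count (n l k : ℕ) (hk : 2 ≤ k) :
    Nat.card (TangledTriple k l n) =
      ∑ i ∈ Finset.range (n + 1),
        n.choose i * (n - i).choose l * fk k (n - i + l) :=
  tangled_count_general n l k
end

section
/- Let S be any one of the three pair-step sets M₃ = {(−e₁,0),(−e₂,0),(0,e₁),(0,e₂)}, P₃ = {(−e₁,0),(−e₂,0),(0,e₁),(0,e₂),(0,0)} ∪ {(−e_h, e_l) : h,l ∈ {1,2}}, or B₃ = {(−e₁,0),(−e₂,0),(0,e₁),(0,e₂)} ∪ {(e_h, −e_l) : h,l ∈ {1,2}}, where e₁=(1,0), e₂=(0,1) and 0 denotes the zero vector in ℤ². Then for every n ≥ 0, the number of S-walks of length 2n from (1,0) to (1,0) all of whose points lie in the region R = {(x,y) ∈ ℤ² : x > y ≥ 0} equals the number of S-walks of length 2n from (1,0) to (1,0) all of whose points lie in the first quadrant {(x,y) ∈ ℤ² : x ≥ 0, y ≥ 0} minus the number of S-walks of length 2n from (1,0) to (0,1) all of whose points lie in the first quadrant. -/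
/-- `IsWalk S n a b Rg p` says that `p = (p 0, p 1, …, p (2n))` is an `S`-walk
of length `2n` from `a` to `b` all of whose points lie in the region `Rg`:
for each `0 ≤ i < n` the pair of consecutive step vectors
`(p (2i+1) - p (2i), p (2i+2) - p (2i+1))` belongs to `S`. -/
def IsWalk (S : Set ((ℤ × ℤ) × (ℤ × ℤ))) (n : ℕ) (a b : ℤ × ℤ)
    (Rg : Set (ℤ × ℤ)) (p : Fin (2 * n + 1) → ℤ × ℤ) : Prop :=
  p ⟨0, by omega⟩ = a ∧ p ⟨2 * n, by omega⟩ = b ∧ (∀ j, p j ∈ Rg) ∧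
    ∀ i : ℕ, (h : i < n) →
      (p ⟨2 * i + 1, by omega⟩ - p ⟨2 * i, by omega⟩,
       p ⟨2 * i + 2, by omega⟩ - p ⟨2 * i + 1, by omega⟩) ∈ S

/-- The number of `S`-walks of length `2n` from `a` to `b` whose points all lie
in the region `Rg`. -/
noncomputable def walkCount (S : Set ((ℤ × ℤ) × (ℤ × ℤ))) (n : ℕ) (a b : ℤ × ℤ)
    (Rg : Set (ℤ × ℤ)) : ℕ :=
  Nat.card {p : Fin (2 * n + 1) → ℤ × ℤ // IsWalk S n a b Rg p}

/-- The unit vector `e₁ = (1,0)`. -/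
def e1 : ℤ × ℤ := (1, 0)

/-- The unit vector `e₂ = (0,1)`. -/
def e2 : ℤ × ℤ := (0, 1)

/-- The step set for `3`-noncrossing matchings:
`M₃ = {(−e₁,0), (−e₂,0), (0,e₁), (0,e₂)}`. -/
def M3 : Set ((ℤ × ℤ) × (ℤ × ℤ)) :=
  {(-e1, 0), (-e2, 0), (0, e1), (0, e2)}

/-- The step set for `3`-noncrossing partitions:
`P₃ = M₃ ∪ {(0,0)} ∪ {(−e_h, e_l) : h,l ∈ {1,2}}`. -/
def P3 : Set ((ℤ × ℤ) × (ℤ × ℤ)) :=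
  {(-e1, 0), (-e2, 0), (0, e1), (0, e2), (0, 0),
   (-e1, e1), (-e1, e2), (-e2, e1), (-e2, e2)}

/-- The step set for `3`-noncrossing braids:
`B₃ = M₃ ∪ {(e_h, −e_l) : h,l ∈ {1,2}}`. -/
def B3 : Set ((ℤ × ℤ) × (ℤ × ℤ)) :=
  {(-e1, 0), (-e2, 0), (0, e1), (0, e2),
   (e1, -e1), (e1, -e2), (e2, -e1), (e2, -e2)}

/-- The region `R = {(x,y) ∈ ℤ² : x > y ≥ 0}`. -/
def regionR : Set (ℤ × ℤ) := {q | q.2 < q.1 ∧ 0 ≤ q.2}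

/-- The first quadrant `{(x,y) ∈ ℤ² : x ≥ 0, y ≥ 0}`. -/
def quadrant : Set (ℤ × ℤ) := {q | 0 ≤ q.1 ∧ 0 ≤ q.2}

/-!
André's reflection principle. Every half-step of an `S`-walk lowers `x - y` by at most one,
so a walk from `(1,0)` that ever reaches `{x ≤ y}` first does so at a point of the diagonal.
Swapping the coordinates of every point from that moment on is again an `S`-walk: the step
pairs after the touching time are swapped as a whole, and the pair straddling it only has its
second half swapped, both of which `S` allows. The map is an involution between the quadrant
walks to `b` that touch `{x ≤ y}` and those to `b.swap`; for `b = (1,0)` every walk to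
`(0,1)` touches, and the walks to `(1,0)` that do not are exactly those in `R`.
-/

open Set

section FirstHit

variable {α : Type*} {m : ℕ} {p q : Fin m → α} {A : Set α}

/-- The first index at which `p` visits `A`; it is `0` (a junk value) if `p` never does. -/
noncomputable def firstHit (p : Fin m → α) (A : Set α) : ℕ :=
  sInf (Fin.val '' (p ⁻¹' A))

lemma exists_val_eq_firstHit (h : ∃ i, p i ∈ A) :
    ∃ i : Fin m, (i : ℕ) = firstHit p A ∧ p i ∈ A := by
  obtain ⟨i, hi⟩ := h
  obtain ⟨j, hj, hval⟩ := Nat.sInf_mem (s := Fin.val '' (p ⁻¹' A)) ⟨i, i, hi, rfl⟩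
  exact ⟨j, hval, hj⟩

lemma firstHit_le {i : Fin m} (hi : p i ∈ A) : firstHit p A ≤ i :=
  Nat.sInf_le ⟨i, hi, rfl⟩

lemma notMem_of_lt_firstHit {i : Fin m} (hi : (i : ℕ) < firstHit p A) : p i ∉ A :=
  fun h => (firstHit_le h).not_gt hi

lemma firstHit_eq_of_eqOn {i₀ : Fin m} (hi₀ : (i₀ : ℕ) = firstHit p A) (hp : p i₀ ∈ A)
    (hq : ∀ i, i ≤ i₀ → q i = p i) : firstHit q A = firstHit p A := by
  have hq₀ : q i₀ ∈ A := (hq i₀ le_rfl).symm ▸ hp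
  refine le_antisymm (hi₀ ▸ firstHit_le hq₀) (not_lt.mp fun hlt => ?_)
  obtain ⟨i, hi, hqi⟩ := exists_val_eq_firstHit ⟨i₀, hq₀⟩
  exact notMem_of_lt_firstHit (hi ▸ hlt) (hq i (by omega) ▸ hqi)

end FirstHit

section ReflectFrom

variable {α : Type*} {m : ℕ} {t : ℕ} {p : Fin m → α × α} {i : Fin m}

def reflectFrom (t : ℕ) (p : Fin m → α × α) (i : Fin m) : α × α :=
  if (i : ℕ) < t then p i else (p i).swap

lemma reflectFrom_of_lt (h : (i : ℕ) < t) : reflectFrom t p i = p i := if_pos h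

lemma reflectFrom_of_le (h : t ≤ i) : reflectFrom t p i = (p i).swap := if_neg h.not_gt

lemma reflectFrom_reflectFrom : reflectFrom t (reflectFrom t p) = p := by
  funext i
  unfold reflectFrom
  split_ifs <;> simp

lemma reflectFrom_of_le_of_swap_eq {i₀ : Fin m} (h₀ : (p i₀).swap = p i₀) (hi : i ≤ i₀) :
    reflectFrom i₀ p i = p i := by
  rcases hi.lt_or_eq with hi | rfl
  · exact reflectFrom_of_lt hi
  · exact (reflectFrom_of_le le_rfl).trans h₀

lemma firstHit_reflectFrom {A : Set (α × α)} {i₀ : Fin m} (hi₀ : (i₀ : ℕ) = firstHit p A)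
    (hp : p i₀ ∈ A) (h₀ : (p i₀).swap = p i₀) : firstHit (reflectFrom i₀ p) A = i₀ :=
  (firstHit_eq_of_eqOn hi₀ hp fun _ hi => reflectFrom_of_le_of_swap_eq h₀ hi).trans hi₀.symm

end ReflectFrom

def aboveDiag : Set (ℤ × ℤ) := {q | q.1 ≤ q.2}

lemma exists_firstHit_aboveDiag_swap_eq {m : ℕ} {p : Fin (m + 1) → ℤ × ℤ}
    (hstep : ∀ j : Fin m, (p j.succ - p j.castSucc).2 ≤ (p j.succ - p j.castSucc).1 + 1)
    (h0 : p 0 ∉ aboveDiag) (hhit : ∃ i, p i ∈ aboveDiag) :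
    ∃ i : Fin (m + 1), (i : ℕ) = firstHit p aboveDiag ∧ 0 < (i : ℕ) ∧ p i ∈ aboveDiag ∧
      (p i).swap = p i := by
  obtain ⟨i, hi, hpi⟩ := exists_val_eq_firstHit hhit
  obtain ⟨j, rfl⟩ : ∃ j : Fin m, j.succ = i :=
    Fin.exists_succ_eq.mpr fun h => h0 (h ▸ hpi)
  have hprev : p j.castSucc ∉ aboveDiag := notMem_of_lt_firstHit (by simp [← hi])
  have := hstep j
  simp only [aboveDiag, mem_ofPred_eq, not_le, Prod.fst_sub, Prod.snd_sub] at hpi hprev this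
  exact ⟨j.succ, hi, j.succ_pos, hpi, Prod.ext (by simp; omega) (by simp; omega)⟩

lemma Set.Finite.setOf_apply_zero_eq_and_sub_mem {G : Type*} [AddGroup G] {m : ℕ} (a : G)
    {D : Set G} (hD : D.Finite) :
    {p : Fin (m + 1) → G | p 0 = a ∧ ∀ j : Fin m, p j.succ - p j.castSucc ∈ D}.Finite := by
  refine Finite.of_injOn (f := fun p (j : Fin m) => p j.succ - p j.castSucc)
    (t := univ.pi fun _ => D) (fun p hp j _ => hp.2 j) ?_ (Finite.pi fun _ => hD)
  intro p hp q hq hpq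
  funext i
  induction i using Fin.induction with
  | zero => exact hp.1.trans hq.1.symm
  | succ j ih => simpa [ih] using congrFun hpq j

structure IsDiagonallyReflectable (S : Set ((ℤ × ℤ) × (ℤ × ℤ))) : Prop where
  finite : S.Finite
  snd_le_fst_add_one : ∀ s ∈ S, s.1.2 ≤ s.1.1 + 1 ∧ s.2.2 ≤ s.2.1 + 1
  swap_snd_mem : ∀ s ∈ S, (s.1, s.2.swap) ∈ S
  swap_mem : ∀ s ∈ S, (s.1.swap, s.2.swap) ∈ S

def halfSteps (S : Set ((ℤ × ℤ) × (ℤ × ℤ))) : Set (ℤ × ℤ) := Prod.fst '' S ∪ Prod.snd '' S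

lemma IsDiagonallyReflectable.snd_le_fst_add_one_of_mem_halfSteps
    {S : Set ((ℤ × ℤ) × (ℤ × ℤ))} (hS : IsDiagonallyReflectable S) {d : ℤ × ℤ}
    (hd : d ∈ halfSteps S) : d.2 ≤ d.1 + 1 := by
  rcases hd with ⟨s, hs, rfl⟩ | ⟨s, hs, rfl⟩
  exacts [(hS.snd_le_fst_add_one s hs).1, (hS.snd_le_fst_add_one s hs).2]

namespace IsWalk

variable {S : Set ((ℤ × ℤ) × (ℤ × ℤ))} {n : ℕ} {a b : ℤ × ℤ} {Rg : Set (ℤ × ℤ)}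
  {p : Fin (2 * n + 1) → ℤ × ℤ}

lemma sub_mem_halfSteps (hw : IsWalk S n a b Rg p) (j : Fin (2 * n)) :
    p j.succ - p j.castSucc ∈ halfSteps S := by
  obtain ⟨j, hj⟩ := j
  obtain ⟨i, rfl | rfl⟩ := Nat.even_or_odd' j
  · exact Or.inl ⟨_, hw.2.2.2 i (by omega), rfl⟩
  · exact Or.inr ⟨_, hw.2.2.2 i (by omega), rfl⟩

lemma finite_setOf (hS : S.Finite) : {p | IsWalk S n a b Rg p}.Finite :=
  ((hS.image _).union (hS.image _)).setOf_apply_zero_eq_and_sub_mem a |>.subset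
    fun _ hw => ⟨hw.1, hw.sub_mem_halfSteps⟩

lemma _root_.isWalk_sdiff_iff {A : Set (ℤ × ℤ)} :
    IsWalk S n a b (Rg \ A) p ↔ IsWalk S n a b Rg p ∧ ∀ i, p i ∉ A := by
  simp only [IsWalk, mem_sdiff, forall_and]
  tauto

lemma reflectFrom (hS : IsDiagonallyReflectable S) (hRg : ∀ q ∈ Rg, q.swap ∈ Rg)
    (hw : IsWalk S n a b Rg p) {t : Fin (2 * n + 1)} (ht : 0 < (t : ℕ))
    (hdiag : (p t).swap = p t) : IsWalk S n a b.swap Rg (reflectFrom t p) := by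
  obtain ⟨ha, hb, hmem, hstep⟩ := hw
  refine ⟨(reflectFrom_of_lt ht).trans ha,
    (reflectFrom_of_le (Nat.le_of_lt_succ t.isLt)).trans (congrArg _ hb), fun i => ?_,
    fun i hi => ?_⟩
  · by_cases hi : (i : ℕ) < t
    · exact (reflectFrom_of_lt hi).symm ▸ hmem i
    · exact (reflectFrom_of_le (not_lt.mp hi)).symm ▸ hRg _ (hmem i)
  rcases show (t : ℕ) ≤ 2 * i ∨ (t : ℕ) = 2 * i + 1 ∨ 2 * i + 2 ≤ t by omega with h | h | h
  · simp only [_root_.reflectFrom, show ¬2 * i < (t : ℕ) by omega,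
      show ¬2 * i + 1 < (t : ℕ) by omega, show ¬2 * i + 2 < (t : ℕ) by omega, if_false,
      ← Prod.swap_sub]
    exact hS.swap_mem _ (hstep i hi)
  · have hmid : (p ⟨2 * i + 1, by omega⟩).swap = p ⟨2 * i + 1, by omega⟩ :=
      (Fin.ext h : t = ⟨2 * i + 1, by omega⟩) ▸ hdiag
    simp only [_root_.reflectFrom, show 2 * i < (t : ℕ) by omega,
      show ¬2 * i + 1 < (t : ℕ) by omega, show ¬2 * i + 2 < (t : ℕ) by omega, if_true, if_false,
      hmid]
    convert hS.swap_snd_mem _ (hstep i hi) using 2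
    rw [Prod.swap_sub, hmid]
  · have hle : ∀ k (hk : k ≤ 2 * i + 2), _root_.reflectFrom t p ⟨k, by omega⟩ = p ⟨k, by omega⟩ :=
      fun k hk => reflectFrom_of_le_of_swap_eq hdiag (Fin.le_def.mpr (by simp; omega))
    rw [hle (2 * i) (by omega), hle (2 * i + 1) (by omega), hle (2 * i + 2) le_rfl]
    exact hstep i hi

end IsWalk

noncomputable def reflectAtFirstHit {m : ℕ} (p : Fin m → ℤ × ℤ) : Fin m → ℤ × ℤ :=
  reflectFrom (firstHit p aboveDiag) p

def hittingWalks (S : Set ((ℤ × ℤ) × (ℤ × ℤ))) (n : ℕ) (a b : ℤ × ℤ) (Rg : Set (ℤ × ℤ)) :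
    Set (Fin (2 * n + 1) → ℤ × ℤ) :=
  {p | IsWalk S n a b Rg p ∧ ∃ i, p i ∈ aboveDiag}

section Reflection

variable {S : Set ((ℤ × ℤ) × (ℤ × ℤ))} {n : ℕ} {a b : ℤ × ℤ} {Rg : Set (ℤ × ℤ)}
  {p : Fin (2 * n + 1) → ℤ × ℤ}

lemma IsWalk.exists_firstHit_swap_eq (hS : IsDiagonallyReflectable S) (ha : a ∉ aboveDiag)
    (hw : IsWalk S n a b Rg p) (hhit : ∃ i, p i ∈ aboveDiag) :
    ∃ i : Fin (2 * n + 1), (i : ℕ) = firstHit p aboveDiag ∧ 0 < (i : ℕ) ∧ p i ∈ aboveDiag ∧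
      (p i).swap = p i :=
  exists_firstHit_aboveDiag_swap_eq
    (fun j => hS.snd_le_fst_add_one_of_mem_halfSteps (hw.sub_mem_halfSteps j)) (hw.1 ▸ ha) hhit

lemma mapsTo_reflectAtFirstHit (hS : IsDiagonallyReflectable S)
    (hRg : ∀ q ∈ Rg, q.swap ∈ Rg) (ha : a ∉ aboveDiag) :
    MapsTo reflectAtFirstHit (hittingWalks S n a b Rg) (hittingWalks S n a b.swap Rg) := by
  rintro p ⟨hw, hhit⟩
  obtain ⟨i, hi, hi0, hpi, hdiag⟩ := hw.exists_firstHit_swap_eq hS ha hhit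
  rw [reflectAtFirstHit, ← hi]
  exact ⟨hw.reflectFrom hS hRg hi0 hdiag, i, (reflectFrom_of_le_of_swap_eq hdiag le_rfl).symm ▸ hpi⟩

lemma reflectAtFirstHit_reflectAtFirstHit (hS : IsDiagonallyReflectable S)
    (ha : a ∉ aboveDiag) (hp : p ∈ hittingWalks S n a b Rg) :
    reflectAtFirstHit (reflectAtFirstHit p) = p := by
  obtain ⟨i, hi, -, hpi, hdiag⟩ := hp.1.exists_firstHit_swap_eq hS ha hp.2
  rw [reflectAtFirstHit, reflectAtFirstHit, ← hi, firstHit_reflectFrom hi hpi hdiag,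
    reflectFrom_reflectFrom]

lemma ncard_hittingWalks_swap (hS : IsDiagonallyReflectable S) (hRg : ∀ q ∈ Rg, q.swap ∈ Rg)
    (ha : a ∉ aboveDiag) :
    (hittingWalks S n a b Rg).ncard = (hittingWalks S n a b.swap Rg).ncard := by
  refine (InvOn.bijOn ⟨fun p hp => reflectAtFirstHit_reflectAtFirstHit hS ha hp,
    fun p hp => reflectAtFirstHit_reflectAtFirstHit hS ha hp⟩ (mapsTo_reflectAtFirstHit hS hRg ha)
      ?_).ncard_eq
  simpa using mapsTo_reflectAtFirstHit (b := b.swap) hS hRg ha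

lemma walkCount_eq_ncard : walkCount S n a b Rg = {p | IsWalk S n a b Rg p}.ncard :=
  Nat.card_coe_set_eq _

theorem walkCount_eq_add_walkCount_swap (hS : IsDiagonallyReflectable S)
    (hRg : ∀ q ∈ Rg, q.swap ∈ Rg) (ha : a ∉ aboveDiag) (hb : b.swap ∈ aboveDiag) :
    walkCount S n a b Rg = walkCount S n a b (Rg \ aboveDiag) + walkCount S n a b.swap Rg := by
  have hmiss : {p | IsWalk S n a b Rg p} \ {p | ∃ i, p i ∈ aboveDiag} =
      {p | IsWalk S n a b (Rg \ aboveDiag) p} := by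
    ext p
    simp [isWalk_sdiff_iff]
  have hall : hittingWalks S n a b.swap Rg = {p | IsWalk S n a b.swap Rg p} :=
    ext fun p => ⟨And.left, fun hw => ⟨hw, _, hw.2.1 ▸ hb⟩⟩
  rw [walkCount_eq_ncard, walkCount_eq_ncard, walkCount_eq_ncard, ← hmiss, ← hall,
    ← ncard_hittingWalks_swap hS hRg ha]
  exact (ncard_inter_add_ncard_sdiff_eq_ncard _ _ (IsWalk.finite_setOf hS.finite)).symm.trans
    (Nat.add_comm _ _)

end Reflection

lemma IsDiagonallyReflectable.of_eq_M3_or_P3_or_B3 {S : Set ((ℤ × ℤ) × (ℤ × ℤ))}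
    (hS : S = M3 ∨ S = P3 ∨ S = B3) : IsDiagonallyReflectable S := by
  rcases hS with rfl | rfl | rfl <;> constructor <;> simp [M3, P3, B3, e1, e2]

lemma swap_mem_quadrant : ∀ q ∈ quadrant, q.swap ∈ quadrant :=
  fun _ hq => ⟨hq.2, hq.1⟩

lemma regionR_eq_quadrant_sdiff : regionR = quadrant \ aboveDiag := by
  ext q
  simp only [regionR, quadrant, aboveDiag, mem_sdiff, mem_ofPred_eq]
  omega

/-- The reflection principle: for `S ∈ {M₃, P₃, B₃}` and every `n ≥ 0`, the
number of `S`-walks of length `2n` from `(1,0)` to `(1,0)` staying in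
`R = {x > y ≥ 0}` equals the number of `S`-walks of length `2n` from `(1,0)`
to `(1,0)` staying in the first quadrant minus the number of `S`-walks of
length `2n` from `(1,0)` to `(0,1)` staying in the first quadrant. -/
theorem reflection_principle (S : Set ((ℤ × ℤ) × (ℤ × ℤ)))
    (hS : S = M3 ∨ S = P3 ∨ S = B3) (n : ℕ) :
    (walkCount S n (1, 0) (1, 0) regionR : ℤ) =
      (walkCount S n (1, 0) (1, 0) quadrant : ℤ) -
        (walkCount S n (1, 0) (0, 1) quadrant : ℤ) := by
  have hcount := walkCount_eq_add_walkCount_swap (n := n) (a := (1, 0)) (b := (1, 0))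
    (IsDiagonallyReflectable.of_eq_M3_or_P3_or_B3 hS) swap_mem_quadrant
    (by simp [aboveDiag]) (by simp [aboveDiag])
  rw [Prod.swap_prod_mk, ← regionR_eq_quadrant_sdiff] at hcount
  omega
end
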